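/- Let E be a normed additive commutative group, let f ∈ E, let ι be an index type, let g : ι → E be a family of elements of E, let P_opt and P_d be finite subsets of ι, and let ε > 0. Assume: (i) ‖f − ∑_{k ∈ P_opt ∪ P_d} g k‖ ≤ ε; and (ii) ‖g k‖ ≤ ε for every k ∈ P_opt \ P_d. Then ‖f − ∑_{k ∈ P_d} g k‖ ≤ ε·(1 + #(P_opt \ P_d)). -/
import Mathlib


open Finset

/-- Abstract form of Theorem 1 of the paper: in a normed additive commutative group,
if `‖f - ∑ k ∈ Popt ∪ Pd, g k‖ ≤ ε` and `‖g k‖ ≤ ε` for every `k ∈ Popt \ Pd`, then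
`‖f - ∑ k ∈ Pd, g k‖ ≤ ε * (1 + #(Popt \ Pd))`. -/
theorem hGSG_error_bound {E : Type*} [NormedAddCommGroup E] {ι : Type*} [DecidableEq ι]
    (f : E) (g : ι → E) (Popt Pd : Finset ι) (ε : ℝ) (hε : 0 < ε)
    (h1 : ‖f - ∑ k ∈ Popt ∪ Pd, g k‖ ≤ ε)
    (h2 : ∀ k ∈ Popt \ Pd, ‖g k‖ ≤ ε) :
    ‖f - ∑ k ∈ Pd, g k‖ ≤ ε * (1 + ((Popt \ Pd).card : ℝ)) := by
  have hsplit : ∑ k ∈ Popt ∪ Pd, g k = ∑ k ∈ Popt \ Pd, g k + ∑ k ∈ Pd, g k := by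
    rw [← Finset.sum_union (Finset.sdiff_disjoint), Finset.sdiff_union_self_eq_union]
  have key : f - ∑ k ∈ Pd, g k = (f - ∑ k ∈ Popt ∪ Pd, g k) + ∑ k ∈ Popt \ Pd, g k := by
    rw [hsplit]; abel
  rw [key]
  calc ‖(f - ∑ k ∈ Popt ∪ Pd, g k) + ∑ k ∈ Popt \ Pd, g k‖
      ≤ ‖f - ∑ k ∈ Popt ∪ Pd, g k‖ + ‖∑ k ∈ Popt \ Pd, g k‖ := norm_add_le _ _
    _ ≤ ε + ∑ k ∈ Popt \ Pd, ‖g k‖ := add_le_add h1 (norm_sum_le _ _)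
    _ ≤ ε + ∑ k ∈ Popt \ Pd, ε := by gcongr with k hk; exact h2 k hk
    _ = ε * (1 + ((Popt \ Pd).card : ℝ)) := by
        rw [Finset.sum_const, nsmul_eq_mul]; ring
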